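/- Uniqueness of the Weierstrass form of a 1-form (Lemma 4.1, uniqueness part): Let n > 1 be an integer and let f = Σ_{i=0}^{n} a_i(X)·Y^{n−i} ∈ ℂ⟦X⟧[Y] be of degree n in Y with a_0(0) ≠ 0 and a_i(0) = 0 for all 1 ≤ i ≤ n (equivalently ord(f) = deg_Y(f) = n). Then for every pair R, S ∈ ℂ⟦X,Y⟧ the decomposition R = h·f_X + p·f + A, S = h·f_Y + B with h, p ∈ ℂ⟦X,Y⟧ and A, B ∈ ℂ⟦X⟧[Y] satisfying (A = 0 or deg_Y A < n) and (B = 0 or deg_Y B < n − 1) is unique: if (h₁,p₁,A₁,B₁) and (h₂,p₂,A₂,B₂) are two such decompositions of the same pair (R,S), then h₁ = h₂, p₁ = p₂, A₁ = A₂ and B₁ = B₂. -/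

import Mathlib

/-!
Order the monomials `X^a Y^b` lexicographically, `X` first. The hypotheses on `f` say exactly
that the lex-leading monomial of `f` is `Y^n`, and then that of `f_Y` is `Y^(n-1)`. As
`ℂ⟦X,Y⟧` is a domain, leading monomials multiply, so a nonzero multiple of `f_Y` has its leading
monomial in `Y`-degree `≥ n - 1`. Subtracting two decompositions of `S` gives
`(h₁ - h₂) f_Y = B₂ - B₁`, where `B₂ - B₁` has no monomial of `Y`-degree `≥ n - 1`; hence
`h₁ = h₂` and `B₁ = B₂`. The same argument with `f` in place of `f_Y` applied to the two
decompositions of `R` gives `p₁ = p₂` and `A₁ = A₂`.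
-/

noncomputable section

/-- `ℂ⟦X,Y⟧`: formal power series in two variables over `ℂ`. -/
abbrev PS2 : Type := MvPowerSeries (Fin 2) ℂ

/-- Embedding of `ℂ⟦X⟧[Y]` into `ℂ⟦X,Y⟧`:
`P = Σ_j a_j(X) Y^j ↦ Σ_{i,j} (coeff of X^i in a_j) X^i Y^j`. -/
def toMv (P : Polynomial (PowerSeries ℂ)) : PS2 :=
  fun m => PowerSeries.coeff (m 0) (P.coeff (m 1))

/-- Partial derivative of a power series in `ℂ⟦X,Y⟧` with respect to variable `i`
(`pd 0` is `∂/∂X`, `pd 1` is `∂/∂Y`). -/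
def pd (i : Fin 2) (f : PS2) : PS2 :=
  fun m => ((m i + 1 : ℕ) : ℂ) * MvPowerSeries.coeff (m + Finsupp.single i 1) f

/-- `ord f`: the least total degree of a monomial occurring in `f`. -/
def tord (f : PS2) : ℕ :=
  sInf {d | ∃ m : Fin 2 →₀ ℕ, m 0 + m 1 = d ∧ MvPowerSeries.coeff m f ≠ 0}

/-- Intersection number `i₀(f,g) = dim_ℂ ℂ⟦X,Y⟧/(f,g)`. -/
def i0 (f g : PS2) : ℕ :=
  Module.finrank ℂ (PS2 ⧸ Ideal.span ({f, g} : Set PS2))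

lemma Polynomial.degree_sub_lt_of_eq_zero_or_natDegree_lt {R : Type*} [Ring R]
    {A B : Polynomial R} {n : ℕ} (hA : A = 0 ∨ A.natDegree < n) (hB : B = 0 ∨ B.natDegree < n) :
    (A - B).degree < n := by
  have degree_lt {C : Polynomial R} (hC : C = 0 ∨ C.natDegree < n) : C.degree < n := by
    rcases hC with rfl | hC
    · simp
    · exact degree_le_natDegree.trans_lt (by exact_mod_cast hC)
  exact (degree_sub_le A B).trans_lt (max_lt (degree_lt hA) (degree_lt hB))

open MvPowerSeries

lemma coeff_toMv (P : Polynomial (PowerSeries ℂ)) (m : Fin 2 →₀ ℕ) :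
    coeff m (toMv P) = PowerSeries.coeff (m 0) (P.coeff (m 1)) := rfl

lemma toMv_sub (A B : Polynomial (PowerSeries ℂ)) : toMv (A - B) = toMv A - toMv B := by
  ext m
  simp [coeff_toMv]

lemma toMv_injective : Function.Injective toMv := by
  intro A B h
  ext j i
  have e := congrArg (coeff (Finsupp.single 0 i + Finsupp.single 1 j)) h
  simpa [coeff_toMv] using e

lemma pd_one_toMv (P : Polynomial (PowerSeries ℂ)) :
    pd 1 (toMv P) = toMv (Polynomial.derivative P) := by
  ext m
  have hC : ((m 1 : PowerSeries ℂ) + 1) = PowerSeries.C ((m 1 : ℂ) + 1) := by simp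
  change ((m 1 + 1 : ℕ) : ℂ) * coeff (m + Finsupp.single 1 1) (toMv P) = _
  rw [coeff_toMv, coeff_toMv, Polynomial.coeff_derivative, hC, PowerSeries.coeff_mul_C]
  simp [mul_comm]

lemma toLex_lt_toLex_single_one {m : Fin 2 →₀ ℕ} {d : ℕ}
    (h : toLex m < toLex (Finsupp.single 1 d)) : m 0 = 0 ∧ m 1 < d := by
  obtain ⟨i, hlt, hi⟩ := Finsupp.Lex.lt_iff.mp h
  fin_cases i
  · simp at hi
  · have := hlt 0 (by decide)
    simp_all

lemma lexOrder_toMv {P : Polynomial (PowerSeries ℂ)} {d : ℕ}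
    (hd : PowerSeries.constantCoeff (P.coeff d) ≠ 0)
    (hlt : ∀ j < d, PowerSeries.constantCoeff (P.coeff j) = 0) :
    lexOrder (toMv P) = toLex (Finsupp.single (1 : Fin 2) d) := by
  refine le_antisymm (lexOrder_le_of_coeff_ne_zero (by simpa [coeff_toMv] using hd)) ?_
  refine le_lexOrder_iff.mpr fun m hm => ?_
  obtain ⟨hm0, hm1⟩ := toLex_lt_toLex_single_one (WithTop.coe_lt_coe.mp hm)
  simpa [coeff_toMv, hm0] using hlt _ hm1

lemma lexOrder_pd_one_toMv {P : Polynomial (PowerSeries ℂ)} {d : ℕ} (hd : 0 < d)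
    (hPd : PowerSeries.constantCoeff (P.coeff d) ≠ 0)
    (hlt : ∀ j < d, PowerSeries.constantCoeff (P.coeff j) = 0) :
    lexOrder (pd 1 (toMv P)) = toLex (Finsupp.single (1 : Fin 2) (d - 1)) := by
  obtain ⟨d, rfl⟩ := Nat.exists_eq_add_of_lt hd
  rw [pd_one_toMv]
  refine lexOrder_toMv ?_ fun j hj => ?_ <;> simp only [Polynomial.coeff_derivative, map_mul]
  · simpa [Nat.cast_add_one_ne_zero] using hPd
  · simp [hlt (j + 1) (by omega)]

lemma eq_zero_of_mul_eq_toMv {g h : PS2} {d : ℕ}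
    (hg : lexOrder g = toLex (Finsupp.single (1 : Fin 2) d))
    {B : Polynomial (PowerSeries ℂ)} (hB : B.degree < d) (heq : h * g = toMv B) : h = 0 := by
  by_contra hh
  obtain ⟨q, hq⟩ := exists_finsupp_eq_lexOrder_of_ne_zero hh
  have hlead : coeff (q + Finsupp.single 1 d) (toMv B) ≠ 0 := by
    rw [← heq, coeff_mul_of_add_lexOrder hq hg]
    exact mul_ne_zero (coeff_ne_zero_of_lexOrder hq.symm) (coeff_ne_zero_of_lexOrder hg.symm)
  refine hlead ?_
  rw [coeff_toMv, Polynomial.coeff_eq_zero_of_degree_lt, map_zero]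
  simpa using hB.trans_le (by exact_mod_cast Nat.le_add_left d (q 1))

theorem weierstrass_form_uniqueness_general
    (n : ℕ) (hn : 1 < n) (f : Polynomial (PowerSeries ℂ))
    (ha0 : PowerSeries.constantCoeff (f.coeff n) ≠ 0)
    (hai : ∀ j < n, PowerSeries.constantCoeff (f.coeff j) = 0)
    (R S : PS2)
    (h₁ p₁ h₂ p₂ : PS2) (A₁ B₁ A₂ B₂ : Polynomial (PowerSeries ℂ))
    (hA₁ : A₁ = 0 ∨ A₁.natDegree < n) (hB₁ : B₁ = 0 ∨ B₁.natDegree < n - 1)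
    (hA₂ : A₂ = 0 ∨ A₂.natDegree < n) (hB₂ : B₂ = 0 ∨ B₂.natDegree < n - 1)
    (hR₁ : R = h₁ * pd 0 (toMv f) + p₁ * toMv f + toMv A₁)
    (hS₁ : S = h₁ * pd 1 (toMv f) + toMv B₁)
    (hR₂ : R = h₂ * pd 0 (toMv f) + p₂ * toMv f + toMv A₂)
    (hS₂ : S = h₂ * pd 1 (toMv f) + toMv B₂) :
    h₁ = h₂ ∧ p₁ = p₂ ∧ A₁ = A₂ ∧ B₁ = B₂ := by
  have hf := lexOrder_toMv ha0 hai
  have hfY := lexOrder_pd_one_toMv (by omega) ha0 hai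
  have hh : h₁ - h₂ = 0 := eq_zero_of_mul_eq_toMv hfY
    (Polynomial.degree_sub_lt_of_eq_zero_or_natDegree_lt hB₂ hB₁)
    (by rw [toMv_sub]; linear_combination hS₂ - hS₁)
  obtain rfl : h₁ = h₂ := sub_eq_zero.mp hh
  have hp : p₁ - p₂ = 0 := eq_zero_of_mul_eq_toMv hf
    (Polynomial.degree_sub_lt_of_eq_zero_or_natDegree_lt hA₂ hA₁)
    (by rw [toMv_sub]; linear_combination hR₂ - hR₁)
  obtain rfl : p₁ = p₂ := sub_eq_zero.mp hp
  exact ⟨rfl, rfl, toMv_injective (by linear_combination hR₂ - hR₁),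
    toMv_injective (by linear_combination hS₂ - hS₁)⟩

/-- Uniqueness of the Weierstrass form of a 1-form (Lemma 4.1, uniqueness part). -/
theorem weierstrass_form_uniqueness
    (n : ℕ) (hn : 1 < n) (f : Polynomial (PowerSeries ℂ))
    (hdeg : f.natDegree = n)
    (ha0 : PowerSeries.constantCoeff (f.coeff n) ≠ 0)
    (hai : ∀ j < n, PowerSeries.constantCoeff (f.coeff j) = 0)
    (R S : PS2)
    (h₁ p₁ h₂ p₂ : PS2) (A₁ B₁ A₂ B₂ : Polynomial (PowerSeries ℂ))
    (hA₁ : A₁ = 0 ∨ A₁.natDegree < n) (hB₁ : B₁ = 0 ∨ B₁.natDegree < n - 1)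
    (hA₂ : A₂ = 0 ∨ A₂.natDegree < n) (hB₂ : B₂ = 0 ∨ B₂.natDegree < n - 1)
    (hR₁ : R = h₁ * pd 0 (toMv f) + p₁ * toMv f + toMv A₁)
    (hS₁ : S = h₁ * pd 1 (toMv f) + toMv B₁)
    (hR₂ : R = h₂ * pd 0 (toMv f) + p₂ * toMv f + toMv A₂)
    (hS₂ : S = h₂ * pd 1 (toMv f) + toMv B₂) :
    h₁ = h₂ ∧ p₁ = p₂ ∧ A₁ = A₂ ∧ B₁ = B₂ :=
  weierstrass_form_uniqueness_general n hn f ha0 hai R S h₁ p₁ h₂ p₂ A₁ B₁ A₂ B₂ hA₁ hB₁ hA₂ hB₂ hR₁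
    hS₁ hR₂ hS₂
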